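/- arXiv:1310.3130 — 2 statements merged into one kernel-verified Lean document; each statement's English description precedes it below -/
import Mathlib

section
/- For every y ∈ ℝ, A₂(y) = −(1/(4√(2π))) y e^{−2y²} + (1/(4√2 π)) e^{−2y²} + (3/(4√(6π))) y e^{−2y²/3} erfc(−2y/√3) + (1/2 + 2y²) A₁(y). -/
open MeasureTheory Real Filter

/-- The error function `erf`. -/
noncomputable def erf (x : ℝ) : ℝ := (2 / Real.sqrt Real.pi) * ∫ t in (0 : ℝ)..x, Real.exp (-t ^ 2)

/-- The complementary error function `erfc`. -/
noncomputable def erfc (x : ℝ) : ℝ := 1 - erf x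

noncomputable def A₁ (y : ℝ) : ℝ :=
  -(1 / (2 * Real.sqrt (2 * Real.pi))) *
    ∫ t in Set.Ioi (0 : ℝ), Real.exp (-2 * (t - y) ^ 2) * erfc t

noncomputable def A₂ (y : ℝ) : ℝ :=
  (1 / Real.sqrt (2 * Real.pi)) *
    ∫ t in Set.Ioi (0 : ℝ),
      Real.exp (-2 * (t - y) ^ 2) * t * (Real.exp (-t ^ 2) / Real.sqrt Real.pi - t * erfc t)

noncomputable def A₃ (y : ℝ) : ℝ :=
  (1 / 4) * (1 + erf (Real.sqrt 2 * y)) *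
    (-(y * Real.exp (-2 * y ^ 2)) / Real.sqrt (2 * Real.pi) +
      (1 / 4 + y ^ 2) * (1 - erf (Real.sqrt 2 * y)))

noncomputable def A₄ (y : ℝ) : ℝ :=
  -(1 / Real.sqrt (2 * Real.pi)) *
    ∫ t₁ in Set.Ioi (0 : ℝ), ∫ t₂ in Set.Ioo (0 : ℝ) t₁,
      (1 / (t₁ - t₂)) *
        (Real.exp (-2 * (t₁ - y) ^ 2) * (erf (t₁ - t₂) + erf (Real.sqrt 2 * (t₂ - y))) +
          Real.exp (-2 * (t₂ - y) ^ 2) * (erf (t₁ - t₂) - erf (Real.sqrt 2 * (t₁ - y))))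

noncomputable def A (y : ℝ) : ℝ := A₁ y + A₂ y + A₃ y + A₄ y

open Set Topology

/-! The integrand of `A₂` plus `(1/4 + y²)` times the integrand of `A₁` has the explicit
antiderivative `A₂Primitive y`. Besides elementary Gaussian terms it contains an `erf` term,
because completing the square turns `e^{-2(t-y)²} e^{-t²}` into `e^{-2y²/3} e^{-(√3 t - 2y/√3)²}`.
Integrating over `(0, ∞)` and evaluating the primitive at `0` and at `∞` gives the identity. -/

lemma hasDerivAt_erf (x : ℝ) : HasDerivAt erf (2 / √π * exp (-x ^ 2)) x :=
  ((Continuous.integral_hasStrictDerivAt (by fun_prop) 0 x).hasDerivAt).const_mul _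

lemma hasDerivAt_erfc (x : ℝ) : HasDerivAt erfc (-(2 / √π * exp (-x ^ 2))) x :=
  (hasDerivAt_erf x).const_sub 1

lemma continuous_erf : Continuous erf :=
  continuous_iff_continuousAt.2 fun x => (hasDerivAt_erf x).continuousAt

lemma continuous_erfc : Continuous erfc := continuous_const.sub continuous_erf

lemma erf_zero : erf 0 = 0 := by simp [erf]

lemma erfc_zero : erfc 0 = 1 := by simp [erfc, erf_zero]

lemma monotone_erf : Monotone erf :=
  monotone_of_hasDerivAt_nonneg hasDerivAt_erf fun _ => by positivity

lemma tendsto_erf_atTop : Tendsto erf atTop (𝓝 1) := by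
  have h := (intervalIntegral_tendsto_integral_Ioi 0
    (integrable_exp_neg_mul_sq one_pos).integrableOn tendsto_id).const_mul (2 / √π)
  have hπ : 2 / √π * (√π / 2) = 1 := by field_simp
  rw [integral_gaussian_Ioi, div_one, hπ] at h
  simp only [id, neg_mul, one_mul] at h
  exact h

lemma tendsto_erfc_atTop : Tendsto erfc atTop (𝓝 0) := by
  have h := tendsto_erf_atTop.const_sub 1
  rwa [sub_self] at h

lemma erf_le_one (x : ℝ) : erf x ≤ 1 := monotone_erf.ge_of_tendsto tendsto_erf_atTop x

lemma abs_erfc_le_one {x : ℝ} (hx : 0 ≤ x) : |erfc x| ≤ 1 := by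
  have h0 : 0 ≤ erf x := erf_zero ▸ monotone_erf hx
  rw [abs_le, erfc]
  constructor <;> linarith [erf_le_one x]

lemma ae_restrict_Ioi_norm_erfc_le_one : ∀ᵐ t ∂volume.restrict (Ioi (0 : ℝ)), ‖erfc t‖ ≤ 1 :=
  (ae_restrict_iff' measurableSet_Ioi).2 <| ae_of_all _ fun _ ht => abs_erfc_le_one (le_of_lt ht)

lemma integrable_pow_mul_exp_neg_mul_sq {b : ℝ} (hb : 0 < b) (n : ℕ) :
    Integrable fun x : ℝ => x ^ n * exp (-b * x ^ 2) := by
  simpa using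
    integrable_rpow_mul_exp_neg_mul_sq hb (s := n) (neg_one_lt_zero.trans_le n.cast_nonneg)

lemma integrable_pow_mul_exp_neg_mul_sq_sub {b : ℝ} (hb : 0 < b) (n : ℕ) (y : ℝ) :
    Integrable fun t : ℝ => t ^ n * exp (-b * (t - y) ^ 2) := by
  have h : Integrable fun x : ℝ =>
      ∑ m ∈ Finset.range (n + 1), x ^ m * exp (-b * x ^ 2) * (y ^ (n - m) * n.choose m) :=
    integrable_finsetSum _ fun m _ => (integrable_pow_mul_exp_neg_mul_sq hb m).mul_const _
  refine (h.comp_sub_right y).congr (ae_of_all _ fun t => ?_)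
  have hbinom := add_pow (t - y) y n
  rw [sub_add_cancel] at hbinom
  simp only [hbinom, Finset.sum_mul]
  exact Finset.sum_congr rfl fun m _ => by ring

lemma tendsto_exp_neg_mul_sq_sub_atTop {b : ℝ} (hb : 0 < b) (y : ℝ) :
    Tendsto (fun t : ℝ => exp (-b * (t - y) ^ 2)) atTop (𝓝 0) :=
  tendsto_exp_atBot.comp <| ((tendsto_pow_atTop two_ne_zero).comp
    (tendsto_atTop_add_const_right _ (-y) tendsto_id)).const_mul_atTop_of_neg (neg_lt_zero.2 hb)

lemma tendsto_mul_exp_neg_mul_sq_sub_atTop {b : ℝ} (hb : 0 < b) (y : ℝ) :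
    Tendsto (fun t : ℝ => t * exp (-b * (t - y) ^ 2)) atTop (𝓝 0) := by
  have hdecay : Tendsto (fun x : ℝ => x ^ (1 : ℝ) * exp (-b * x ^ 2)) atTop (𝓝 0) :=
    (rpow_mul_exp_neg_mul_sq_isLittleO_exp_neg hb 1).tendsto_zero_of_tendsto <|
      tendsto_exp_atBot.comp <| tendsto_id.const_mul_atTop_of_neg (by norm_num)
  have h := (hdecay.comp (tendsto_atTop_add_const_right _ (-y) tendsto_id)).add
    ((tendsto_exp_neg_mul_sq_sub_atTop hb y).const_mul y)
  rw [mul_zero, add_zero] at h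
  refine h.congr fun t => ?_
  simp only [Function.comp_apply, id, rpow_one, ← sub_eq_add_neg]
  ring

noncomputable def A₂Primitive (y t : ℝ) : ℝ :=
  exp (-2 * (t - y) ^ 2) * ((t + y) / 4 * erfc t - exp (-t ^ 2) / (4 * √π)) +
    √3 * y / 4 * exp (-2 * y ^ 2 / 3) * erf (√3 * t - 2 * y / √3)

lemma A₂Primitive_zero (y : ℝ) :
    A₂Primitive y 0 = exp (-2 * y ^ 2) * (y / 4 - 1 / (4 * √π)) +
      √3 * y / 4 * exp (-2 * y ^ 2 / 3) * erf (-2 * y / √3) := by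
  rw [A₂Primitive, show √3 * 0 - 2 * y / √3 = -2 * y / √3 by ring, zero_sub, neg_sq, zero_add,
    erfc_zero, mul_one, sq (0 : ℝ), mul_zero, neg_zero, exp_zero]

lemma tendsto_A₂Primitive_atTop (y : ℝ) :
    Tendsto (A₂Primitive y) atTop (𝓝 (√3 * y / 4 * exp (-2 * y ^ 2 / 3))) := by
  have hE := tendsto_exp_neg_mul_sq_sub_atTop two_pos y
  have hG : Tendsto (fun t : ℝ => exp (-t ^ 2)) atTop (𝓝 0) :=
    tendsto_exp_atBot.comp (tendsto_neg_atTop_atBot.comp (tendsto_pow_atTop two_ne_zero))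
  have harg : Tendsto (fun t : ℝ => √3 * t - 2 * y / √3) atTop atTop :=
    tendsto_atTop_add_const_right _ _ (tendsto_id.const_mul_atTop (by positivity))
  have hlin := ((tendsto_mul_exp_neg_mul_sq_sub_atTop two_pos y).add (hE.const_mul y)).div_const 4
  have h := ((hlin.mul tendsto_erfc_atTop).sub ((hE.mul hG).div_const (4 * √π))).add
    ((tendsto_erf_atTop.comp harg).const_mul (√3 * y / 4 * exp (-2 * y ^ 2 / 3)))
  simp only [mul_zero, add_zero, zero_div, sub_zero, mul_one, zero_add] at h
  refine h.congr fun t => ?_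
  simp only [A₂Primitive, Function.comp_apply]
  ring

lemma hasDerivAt_A₂Primitive (y t : ℝ) :
    HasDerivAt (A₂Primitive y)
      (exp (-2 * (t - y) ^ 2) * t * (exp (-t ^ 2) / √π - t * erfc t) +
        (1 / 4 + y ^ 2) * (exp (-2 * (t - y) ^ 2) * erfc t)) t := by
  have hE : HasDerivAt (fun t => exp (-2 * (t - y) ^ 2))
      (exp (-2 * (t - y) ^ 2) * (-4 * (t - y))) t :=
    ((((hasDerivAt_id' t).sub_const y).pow 2).const_mul (-2)).congr_deriv (by ring) |>.exp
  have hG : HasDerivAt (fun t => exp (-t ^ 2)) (exp (-t ^ 2) * (-2 * t)) t :=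
    ((hasDerivAt_pow 2 t).fun_neg.congr_deriv (by ring)).exp
  have hlin : HasDerivAt (fun t => √3 * t - 2 * y / √3) √3 t :=
    ((hasDerivAt_id' t).const_mul √3).sub_const _ |>.congr_deriv (mul_one _)
  have hF : HasDerivAt (A₂Primitive y) _ t :=
    (hE.mul ((((hasDerivAt_id' t).add_const y).div_const 4).mul (hasDerivAt_erfc t) |>.sub
      (hG.div_const (4 * √π)))).add
    (((hasDerivAt_erf _).comp t hlin).const_mul (√3 * y / 4 * exp (-2 * y ^ 2 / 3)))
  have h3 : √3 ^ 2 = 3 := sq_sqrt (by norm_num)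
  have hsquare : exp (-2 * y ^ 2 / 3) * exp (-(√3 * t - 2 * y / √3) ^ 2) =
      exp (-2 * (t - y) ^ 2) * exp (-t ^ 2) := by
    rw [← exp_add, ← exp_add, sub_sq, mul_pow, div_pow, h3]
    congr 1
    field_simp
    ring
  refine hF.congr_deriv ?_
  simp only [Pi.mul_apply, Pi.sub_apply]
  linear_combination y * √3 ^ 2 / (2 * √π) * hsquare +
    y * Real.exp (-2 * (t - y) ^ 2) * Real.exp (-t ^ 2) / (2 * √π) * h3

lemma integrableOn_A₁_integrand (y : ℝ) :
    IntegrableOn (fun t => exp (-2 * (t - y) ^ 2) * erfc t) (Ioi 0) := by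
  have h := ((integrable_pow_mul_exp_neg_mul_sq_sub two_pos 0 y).integrableOn).mul_bdd
    continuous_erfc.aestronglyMeasurable ae_restrict_Ioi_norm_erfc_le_one
  simp only [pow_zero, one_mul] at h
  exact h

lemma integrableOn_A₂_integrand (y : ℝ) :
    IntegrableOn (fun t => exp (-2 * (t - y) ^ 2) * t * (exp (-t ^ 2) / √π - t * erfc t))
      (Ioi 0) := by
  have hG : ∀ᵐ t ∂volume.restrict (Ioi (0 : ℝ)), ‖exp (-t ^ 2)‖ ≤ 1 :=
    ae_of_all _ fun t => by
      rw [norm_of_nonneg (exp_pos _).le, exp_le_one_iff, neg_nonpos]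
      positivity
  have h₁ := (((integrable_pow_mul_exp_neg_mul_sq_sub two_pos 1 y).integrableOn).mul_bdd
    (by fun_prop : Continuous fun t : ℝ => exp (-t ^ 2)).aestronglyMeasurable hG).div_const √π
  have h₂ := ((integrable_pow_mul_exp_neg_mul_sq_sub two_pos 2 y).integrableOn).mul_bdd
    continuous_erfc.aestronglyMeasurable ae_restrict_Ioi_norm_erfc_le_one
  refine (h₁.sub h₂).congr (ae_of_all _ fun t => ?_)
  simp only [Pi.sub_apply]
  ring

lemma integral_A₂_integrand_add_A₁_integrand (y : ℝ) :
    (∫ t in Ioi 0, exp (-2 * (t - y) ^ 2) * t * (exp (-t ^ 2) / √π - t * erfc t)) +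
      (1 / 4 + y ^ 2) * ∫ t in Ioi 0, exp (-2 * (t - y) ^ 2) * erfc t =
    √3 * y / 4 * exp (-2 * y ^ 2 / 3) - A₂Primitive y 0 := by
  have hint := (integrableOn_A₁_integrand y).const_mul (1 / 4 + y ^ 2)
  rw [← integral_const_mul, ← integral_add (integrableOn_A₂_integrand y) hint]
  exact integral_Ioi_of_hasDerivAt_of_tendsto' (fun t _ => hasDerivAt_A₂Primitive y t)
    ((integrableOn_A₂_integrand y).add hint) (tendsto_A₂Primitive_atTop y)

/-- Exact identity expressing `A₂` in terms of `A₁`. -/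
theorem A2_representation (y : ℝ) :
    A₂ y =
      -(1 / (4 * Real.sqrt (2 * Real.pi))) * y * Real.exp (-2 * y ^ 2) +
        (1 / (4 * Real.sqrt 2 * Real.pi)) * Real.exp (-2 * y ^ 2) +
        (3 / (4 * Real.sqrt (6 * Real.pi))) * y * Real.exp (-2 * y ^ 2 / 3) *
          erfc (-2 * y / Real.sqrt 3) +
        (1 / 2 + 2 * y ^ 2) * A₁ y := by
  rw [A₂, A₁, eq_sub_of_add_eq (integral_A₂_integrand_add_A₁_integrand y), A₂Primitive_zero, erfc]
  have h2π : √(2 * π) = √2 * √π := sqrt_mul zero_le_two π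
  have h6π : √(6 * π) = √2 * √3 * √π := by
    rw [show (6 : ℝ) * π = 2 * 3 * π by ring, sqrt_mul (by norm_num), sqrt_mul zero_le_two]
  have h3 : √3 ^ 2 = 3 := sq_sqrt (by norm_num)
  have hπ : √π ^ 2 = π := sq_sqrt pi_pos.le
  rw [h2π, h6π, show 4 * √2 * π = 4 * √2 * √π ^ 2 by rw [hπ]]
  field_simp
  linear_combination 4 * √π * y * Real.exp (-(y ^ 2 * 2 / 3)) * (1 - erf (-(y * 2 / √3))) * h3
end

section
/- There exist constants C > 0 and y₀ < 0 such that for all y ≤ y₀, |A₂(y)| ≤ C e^{−2y²}/y²; that is, A₂(y) = O(y^{−2} e^{−2y²}) as y → −∞. -/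
open MeasureTheory Real Filter

/-!
For `t > 0` and `y < 0`, completing the square gives `e^{-2(t-y)²} = e^{-2y²} e^{4yt} e^{-2t²}`.
Since `0 ≤ erf t ≤ 2t`, the bracket in the integrand of `A₂` grows at most quadratically,
so `e^{-2t²}` times it stays below `4`; what is left is
`e^{-2y²} ∫₀^∞ t e^{4yt} dt = e^{-2y²}/(16y²)`.
-/

open scoped Nat
open Set

theorem integral_pow_mul_exp_neg_mul_Ioi (k : ℕ) {b : ℝ} (hb : 0 < b) :
    ∫ t in Ioi (0 : ℝ), t ^ k * exp (-(b * t)) = k ! / b ^ (k + 1) := by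
  have h := integral_rpow_mul_exp_neg_mul_Ioi (by positivity : (0 : ℝ) < k + 1) hb
  simp only [add_sub_cancel_right, rpow_natCast, Gamma_nat_eq_factorial] at h
  rw [h, div_eq_mul_inv, one_mul, mul_comm, inv_rpow hb.le, ← rpow_natCast]
  push_cast
  rfl

theorem integrableOn_pow_mul_exp_neg_mul_Ioi (k : ℕ) {b : ℝ} (hb : 0 < b) :
    IntegrableOn (fun t => t ^ k * exp (-(b * t))) (Ioi 0) :=
  .of_integral_ne_zero (by rw [integral_pow_mul_exp_neg_mul_Ioi k hb]; positivity)

theorem one_le_sqrt_pi : 1 ≤ √π :=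
  one_le_sqrt.mpr (by linarith [pi_gt_three])

theorem erf_nonneg {t : ℝ} (ht : 0 ≤ t) : 0 ≤ erf t :=
  mul_nonneg (by positivity) (intervalIntegral.integral_nonneg ht fun s _ => (exp_pos _).le)

theorem erf_le_two_mul {t : ℝ} (ht : 0 ≤ t) : erf t ≤ 2 * t := by
  have hint : ∫ s in (0 : ℝ)..t, exp (-s ^ 2) ≤ t := by
    simpa using intervalIntegral.integral_mono_on ht
      ((by fun_prop : Continuous fun s : ℝ => exp (-s ^ 2)).intervalIntegrable 0 t)
      (intervalIntegrable_const (μ := volume))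
      fun s _ => exp_le_one_iff.mpr (neg_nonpos.mpr (sq_nonneg s))
  calc erf t ≤ 2 / √π * t := mul_le_mul_of_nonneg_left hint (by positivity)
    _ ≤ 2 * t := by
      gcongr
      exact div_le_self zero_le_two one_le_sqrt_pi

theorem abs_erfc_le {t : ℝ} (ht : 0 ≤ t) : |erfc t| ≤ 1 + 2 * t := by
  have h₀ := erf_nonneg ht
  have h₁ := erf_le_two_mul ht
  rw [abs_le, erfc]
  constructor <;> linarith

theorem exp_neg_two_mul_sq_mul_abs_le {t : ℝ} (ht : 0 ≤ t) :
    exp (-2 * t ^ 2) * |exp (-t ^ 2) / √π - t * erfc t| ≤ 4 := by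
  have hgauss : 0 ≤ exp (-t ^ 2) / √π ∧ exp (-t ^ 2) / √π ≤ 1 :=
    ⟨by positivity, div_le_one_of_le₀ ((exp_le_one_iff.mpr (by nlinarith)).trans one_le_sqrt_pi)
      (by positivity)⟩
  have herfc : |t * erfc t| ≤ t * (1 + 2 * t) := by
    rw [abs_mul, abs_of_nonneg ht]
    exact mul_le_mul_of_nonneg_left (abs_erfc_le ht) ht
  have hpoly : |exp (-t ^ 2) / √π - t * erfc t| ≤ 4 * (2 * t ^ 2 + 1) := by
    rw [abs_le] at herfc ⊢
    constructor <;> nlinarith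
  calc exp (-2 * t ^ 2) * |exp (-t ^ 2) / √π - t * erfc t|
      ≤ exp (-2 * t ^ 2) * (4 * exp (2 * t ^ 2)) := by
        gcongr
        exact hpoly.trans (by linarith [add_one_le_exp (2 * t ^ 2)])
    _ = 4 := by rw [mul_left_comm, ← exp_add]; simp

theorem abs_integral_exp_neg_two_mul_sub_sq_mul_le {f : ℝ → ℝ} {M y : ℝ} (hy : y < 0)
    (hf : ∀ t > 0, exp (-2 * t ^ 2) * |f t| ≤ M) :
    |∫ t in Ioi (0 : ℝ), exp (-2 * (t - y) ^ 2) * t * f t| ≤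
      M * exp (-2 * y ^ 2) / (16 * y ^ 2) := by
  have hb : 0 < -4 * y := by linarith
  have hbound : ∀ t > 0, ‖exp (-2 * (t - y) ^ 2) * t * f t‖ ≤
      M * exp (-2 * y ^ 2) * (t ^ 1 * exp (-((-4 * y) * t))) := by
    intro t ht
    have hsplit : exp (-2 * (t - y) ^ 2) =
        exp (-2 * y ^ 2) * exp (-((-4 * y) * t)) * exp (-2 * t ^ 2) := by
      rw [← exp_add, ← exp_add]; ring_nf
    calc ‖exp (-2 * (t - y) ^ 2) * t * f t‖
        = exp (-2 * y ^ 2) * (t * exp (-((-4 * y) * t))) * (exp (-2 * t ^ 2) * |f t|) := by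
          rw [norm_eq_abs, abs_mul, abs_mul, abs_of_pos (exp_pos _), abs_of_pos ht, hsplit]
          ring
      _ ≤ exp (-2 * y ^ 2) * (t * exp (-((-4 * y) * t))) * M := by
          gcongr
          exact hf t ht
      _ = M * exp (-2 * y ^ 2) * (t ^ 1 * exp (-((-4 * y) * t))) := by ring
  calc |∫ t in Ioi (0 : ℝ), exp (-2 * (t - y) ^ 2) * t * f t|
      ≤ ∫ t in Ioi (0 : ℝ), M * exp (-2 * y ^ 2) * (t ^ 1 * exp (-((-4 * y) * t))) :=
        norm_integral_le_of_norm_le ((integrableOn_pow_mul_exp_neg_mul_Ioi 1 hb).const_mul _)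
          ((ae_restrict_iff' measurableSet_Ioi).mpr (.of_forall hbound))
    _ = M * exp (-2 * y ^ 2) / (16 * y ^ 2) := by
        rw [integral_const_mul, integral_pow_mul_exp_neg_mul_Ioi 1 hb]
        ring

/-- `A₂(y) = O(y^{−2} e^{−2y²})` as `y → −∞`. -/
theorem A2_asymptotics :
    ∃ C > (0 : ℝ), ∃ y₀ < (0 : ℝ), ∀ y ≤ y₀,
      |A₂ y| ≤ C * Real.exp (-2 * y ^ 2) / y ^ 2 := by
  refine ⟨1, one_pos, -1, by norm_num, fun y hy => ?_⟩
  have hy0 : y < 0 := by linarith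
  have hint := abs_integral_exp_neg_two_mul_sub_sq_mul_le hy0 fun t ht =>
    exp_neg_two_mul_sq_mul_abs_le ht.le
  have hc : 1 / √(2 * π) ≤ 1 :=
    div_le_one_of_le₀ (one_le_sqrt.mpr (by linarith [pi_gt_three])) (by positivity)
  calc |A₂ y| ≤ 1 * (4 * exp (-2 * y ^ 2) / (16 * y ^ 2)) := by
        rw [A₂, abs_mul, abs_of_nonneg (by positivity)]
        exact mul_le_mul hc hint (abs_nonneg _) zero_le_one
    _ ≤ 1 * exp (-2 * y ^ 2) / y ^ 2 := by
        rw [one_mul, one_mul, mul_div_mul_comm]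
        exact mul_le_of_le_one_left (by positivity) (by norm_num)
end
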